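/- Let M be an OMMD between S and T, let b, c ∈ S and a, d ∈ T satisfy a ≤ b < c ≤ d, and suppose M contains both pairs (c, a) and (b, d) but contains neither (b, a) nor (c, d). Then M' := (M \ {(c, a), (b, d)}) ∪ {(b, a), (c, d)} is an OMMD between S and T whose cost is strictly smaller than the cost of M. -/

import Mathlib

/-! Replacing the crossing pairs `(c, a), (b, d)` by `(b, a), (c, d)` leaves every point in
exactly as many pairs as before, so the demands stay satisfied, and for `a ≤ b < c ≤ d` it
shortens the total length by `2 (c - b) > 0`. -/

open Finset

/-- A many-to-many matching with demands (OMMD) between point sets `S` and `T`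
on the real line with demand functions `α` (on `S`) and `β` (on `T`):
a set of pairs `(s, t)` with `s ∈ S`, `t ∈ T` such that every `s ∈ S` occurs in
at least `α s` pairs and every `t ∈ T` occurs in at least `β t` pairs. -/
def IsOMMD (S T : Finset ℝ) (α β : ℝ → ℕ) (M : Finset (ℝ × ℝ)) : Prop :=
  (∀ p ∈ M, p.1 ∈ S ∧ p.2 ∈ T) ∧
  (∀ s ∈ S, α s ≤ (M.filter (fun p => p.1 = s)).card) ∧
  (∀ t ∈ T, β t ≤ (M.filter (fun p => p.2 = t)).card)

/-- The cost of a matching: the sum of the distances of its pairs. -/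
noncomputable def mmCost (M : Finset (ℝ × ℝ)) : ℝ := ∑ p ∈ M, |p.1 - p.2|

/-- A minimum-cost OMMD. -/
def IsMinOMMD (S T : Finset ℝ) (α β : ℝ → ℕ) (M : Finset (ℝ × ℝ)) : Prop :=
  IsOMMD S T α β M ∧ ∀ M' : Finset (ℝ × ℝ), IsOMMD S T α β M' → mmCost M ≤ mmCost M'

namespace Finset

variable {ι A : Type*} [DecidableEq ι] [AddCommMonoid A]

lemma sum_sdiff_union_add_sum {s t u : Finset ι} (f : ι → A) (hts : t ⊆ s)
    (hu : Disjoint (s \ t) u) :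
    ∑ i ∈ s \ t ∪ u, f i + ∑ i ∈ t, f i = ∑ i ∈ s, f i + ∑ i ∈ u, f i := by
  rw [sum_union hu, add_right_comm, sum_sdiff hts]

lemma card_filter_sdiff_union_add {s t u : Finset ι} (p : ι → Prop) [DecidablePred p]
    (hts : t ⊆ s) (hu : Disjoint (s \ t) u) :
    #((s \ t ∪ u).filter p) + #(t.filter p) = #(s.filter p) + #(u.filter p) := by
  simp only [card_filter]
  exact sum_sdiff_union_add_sum _ hts hu

end Finset

lemma IsOMMD.sdiff_union {S T : Finset ℝ} {α β : ℝ → ℕ} {M P Q : Finset (ℝ × ℝ)}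
    (hM : IsOMMD S T α β M) (hPM : P ⊆ M) (hQ : Disjoint (M \ P) Q)
    (hQST : ∀ q ∈ Q, q.1 ∈ S ∧ q.2 ∈ T)
    (hfst : ∀ s, #(P.filter (·.1 = s)) ≤ #(Q.filter (·.1 = s)))
    (hsnd : ∀ t, #(P.filter (·.2 = t)) ≤ #(Q.filter (·.2 = t))) :
    IsOMMD S T α β (M \ P ∪ Q) := by
  obtain ⟨hMST, hα, hβ⟩ := hM
  refine ⟨fun q hq => ?_, fun s hs => ?_, fun t ht => ?_⟩
  · rcases mem_union.1 hq with hq | hq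
    · exact hMST q (mem_sdiff.1 hq).1
    · exact hQST q hq
  · have := card_filter_sdiff_union_add (·.1 = s) hPM hQ
    linarith [hα s hs, hfst s]
  · have := card_filter_sdiff_union_add (·.2 = t) hPM hQ
    linarith [hβ t ht, hsnd t]

lemma mmCost_sdiff_union_add {M P Q : Finset (ℝ × ℝ)} (hPM : P ⊆ M) (hQ : Disjoint (M \ P) Q) :
    mmCost (M \ P ∪ Q) + mmCost P = mmCost M + mmCost Q :=
  sum_sdiff_union_add_sum _ hPM hQ

lemma mmCost_pair {p q : ℝ × ℝ} (h : p ≠ q) : mmCost {p, q} = |p.1 - p.2| + |q.1 - q.2| :=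
  sum_pair h

section Uncross

variable {A : Type*} [AddCommMonoid A] {a b c d : ℝ}

lemma sum_fst_uncross (hbc : b ≠ c) (f : ℝ → A) :
    ∑ p ∈ ({(c, a), (b, d)} : Finset (ℝ × ℝ)), f p.1 =
      ∑ p ∈ ({(b, a), (c, d)} : Finset (ℝ × ℝ)), f p.1 := by
  rw [sum_pair (by simp [hbc.symm]), sum_pair (by simp [hbc]), add_comm]

lemma sum_snd_uncross (hbc : b ≠ c) (f : ℝ → A) :
    ∑ p ∈ ({(c, a), (b, d)} : Finset (ℝ × ℝ)), f p.2 =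
      ∑ p ∈ ({(b, a), (c, d)} : Finset (ℝ × ℝ)), f p.2 := by
  rw [sum_pair (by simp [hbc.symm]), sum_pair (by simp [hbc])]

lemma abs_sub_add_abs_sub_lt_of_crossing (h1 : a ≤ b) (h2 : b < c) (h3 : c ≤ d) :
    |b - a| + |c - d| < |c - a| + |b - d| := by
  rw [abs_of_nonneg (by linarith), abs_of_nonpos (by linarith), abs_of_nonneg (by linarith),
    abs_of_nonpos (by linarith)]
  linarith

end Uncross

theorem stmt_11_general (S T : Finset ℝ)
    (α β : ℝ → ℕ)
    (M : Finset (ℝ × ℝ)) (hM : IsOMMD S T α β M)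
    (b c : ℝ) (hb : b ∈ S) (hc : c ∈ S) (a d : ℝ) (ha : a ∈ T) (hd : d ∈ T)
    (h1 : a ≤ b) (h2 : b < c) (h3 : c ≤ d)
    (hca : (c, a) ∈ M) (hbd : (b, d) ∈ M)
    (hba : (b, a) ∉ M) (hcd : (c, d) ∉ M) :
    IsOMMD S T α β ((M \ {(c, a), (b, d)}) ∪ {(b, a), (c, d)}) ∧
      mmCost ((M \ {(c, a), (b, d)}) ∪ {(b, a), (c, d)}) < mmCost M := by
  have hbc : b ≠ c := h2.ne
  have hPM : {(c, a), (b, d)} ⊆ M := insert_subset hca (singleton_subset_iff.2 hbd)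
  have hQ : Disjoint (M \ {(c, a), (b, d)}) {(b, a), (c, d)} :=
    disjoint_of_subset_left sdiff_subset (by simp [hba, hcd])
  refine ⟨hM.sdiff_union hPM hQ ?_ (fun s => ?_) (fun t => ?_), ?_⟩
  · simp [hb, ha, hc, hd]
  · simp only [card_filter]
    exact (sum_fst_uncross hbc fun x => if x = s then 1 else 0).le
  · simp only [card_filter]
    exact (sum_snd_uncross hbc fun x => if x = t then 1 else 0).le
  · have hcost := mmCost_sdiff_union_add hPM hQ
    rw [mmCost_pair (by simp [hbc.symm]), mmCost_pair (by simp [hbc])] at hcost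
    linarith [abs_sub_add_abs_sub_lt_of_crossing h1 h2 h3]

/-- Uncrossing in an OMMD: swapping the crossing pairs `(c, a)` and `(b, d)` for
`(b, a)` and `(c, d)` (when the latter are absent) yields an OMMD of strictly
smaller cost. -/
theorem stmt_11 (S T : Finset ℝ) (hdisj : Disjoint S T) (hS : S.Nonempty) (hT : T.Nonempty)
    (α β : ℝ → ℕ) (hα : ∀ s ∈ S, 1 ≤ α s) (hβ : ∀ t ∈ T, 1 ≤ β t)
    (M : Finset (ℝ × ℝ)) (hM : IsOMMD S T α β M)
    (b c : ℝ) (hb : b ∈ S) (hc : c ∈ S) (a d : ℝ) (ha : a ∈ T) (hd : d ∈ T)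
    (h1 : a ≤ b) (h2 : b < c) (h3 : c ≤ d)
    (hca : (c, a) ∈ M) (hbd : (b, d) ∈ M)
    (hba : (b, a) ∉ M) (hcd : (c, d) ∉ M) :
    IsOMMD S T α β ((M \ {(c, a), (b, d)}) ∪ {(b, a), (c, d)}) ∧
      mmCost ((M \ {(c, a), (b, d)}) ∪ {(b, a), (c, d)}) < mmCost M :=
  stmt_11_general S T α β M hM b c hb hc a d ha hd h1 h2 h3 hca hbd hba hcd
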